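/- arXiv:2602.01810 — 2 statements merged into one kernel-verified Lean document; each statement's English description precedes it below -/
import Mathlib

section
/- Let G be a group, H ≤ G a subgroup, and H₀ ≤ H. Set 𝓗 = ⋂_{b ∈ N_G(H₀)} H^b (the intersection of the conjugates of H by elements normalizing H₀). Assume H₀ ≤ 𝓗 and that H₀ is invariant under every group automorphism of 𝓗. Then N_G(H₀) = N_G(𝓗). -/
namespace Subgroup

variable {G : Type*} [Group G]

theorem mem_iInf_map_conj_inv_iff {K H : Subgroup G} {x : G} :
    x ∈ ⨅ b ∈ K, H.map (MulAut.conj b⁻¹).toMonoidHom ↔ ∀ b ∈ K, b * x * b⁻¹ ∈ H := by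
  simp only [mem_iInf, mem_map_equiv, MulAut.conj_symm_apply, inv_inv]

theorem le_normalizer_iInf_map_conj_inv (K H : Subgroup G) :
    K ≤ normalizer ((⨅ b ∈ K, H.map (MulAut.conj b⁻¹).toMonoidHom : Subgroup G) : Set G) := by
  refine le_normalizer_iff.2 fun g hg x hx => mem_iInf_map_conj_inv_iff.2 fun b hb => ?_
  have hbg : b * g * x * (b * g)⁻¹ ∈ H := mem_iInf_map_conj_inv_iff.1 hx (b * g) (mul_mem hb hg)
  simpa only [mul_assoc, mul_inv_rev] using hbg

/-- Conjugation by an element normalizing `H` restricts to an automorphism of `H`, which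
preserves `K` when `K` is characteristic in `H`. -/
theorem normalizer_le_normalizer_of_characteristic {H K : Subgroup G} (hKH : K ≤ H)
    (hK : (K.subgroupOf H).Characteristic) : normalizer (H : Set G) ≤ normalizer (K : Set G) := by
  intro g hg
  rw [mem_normalizer_iff_map_conj_eq] at hg ⊢
  let φ : H ≃* H :=
    (H.equivMapOfInjective _ (MulAut.conj g).injective).trans (MulEquiv.subgroupCongr hg)
  have hcomm : (MulAut.conj g).toMonoidHom.comp H.subtype = H.subtype.comp φ.toMonoidHom := rfl
  calc K.map (MulAut.conj g) = ((K.subgroupOf H).map H.subtype).map (MulAut.conj g) := by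
        rw [map_subgroupOf_eq_of_le hKH]
    _ = ((K.subgroupOf H).map φ.toMonoidHom).map H.subtype := by
        rw [map_map, map_map]; exact congrArg (fun f => map f (K.subgroupOf H)) hcomm
    _ = K := by
        rw [characteristic_iff_map_eq.1 hK φ, map_subgroupOf_eq_of_le hKH]

end Subgroup

open Subgroup in
theorem stmt10_general {G : Type*} [Group G] (H H₀ : Subgroup G)
    (HH : Subgroup G)
    (hHH : HH = ⨅ b ∈ Subgroup.normalizer (H₀ : Set G), H.map (MulAut.conj b⁻¹).toMonoidHom)
    (hle : H₀ ≤ HH)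
    (hinv : ∀ φ : ↥HH ≃* ↥HH,
      (H₀.subgroupOf HH).map φ.toMonoidHom = H₀.subgroupOf HH) :
    Subgroup.normalizer (H₀ : Set G) = Subgroup.normalizer (HH : Set G) := by
  refine le_antisymm ?_ (normalizer_le_normalizer_of_characteristic hle
    (characteristic_iff_map_eq.2 hinv))
  rw [hHH]
  exact le_normalizer_iInf_map_conj_inv _ H

/-- Let `𝓗 = ⋂_{b ∈ N_G(H₀)} H^b`. If `H₀ ≤ 𝓗` and `H₀` is invariant under every
automorphism of `𝓗`, then `N_G(H₀) = N_G(𝓗)`. -/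
theorem stmt10 {G : Type*} [Group G] (H H₀ : Subgroup G) (hH₀H : H₀ ≤ H)
    (HH : Subgroup G)
    (hHH : HH = ⨅ b ∈ Subgroup.normalizer (H₀ : Set G), H.map (MulAut.conj b⁻¹).toMonoidHom)
    (hle : H₀ ≤ HH)
    (hinv : ∀ φ : ↥HH ≃* ↥HH,
      (H₀.subgroupOf HH).map φ.toMonoidHom = H₀.subgroupOf HH) :
    Subgroup.normalizer (H₀ : Set G) = Subgroup.normalizer (HH : Set G) :=
  stmt10_general H H₀ HH hHH hle hinv
end

section
/- Let S be a monoid and I a minimal left ideal of S containing an idempotent u. Then for every p ∈ I there exists s ∈ I with s·p = u; in particular, for every p ∈ u·I there exists q ∈ u·I with q·p = u. -/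
/-- In a monoid `S`, if `I` is a minimal left ideal containing an idempotent `u`, then
every `p ∈ I` has a left "inverse up to `u`" in `I`, and every `p ∈ u·I` has a
left inverse in `u·I` with respect to `u`. -/
theorem stmt17 {S : Type*} [Monoid S] (I : Set S) (u : S)
    (hne : I.Nonempty) (hideal : ∀ s : S, ∀ x ∈ I, s * x ∈ I)
    (hmin : ∀ K : Set S, K.Nonempty → (∀ s : S, ∀ x ∈ K, s * x ∈ K) → K ⊆ I → K = I)
    (huI : u ∈ I) (hu : u * u = u) :
    (∀ p ∈ I, ∃ s ∈ I, s * p = u) ∧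
    (∀ p ∈ (fun x => u * x) '' I, ∃ q ∈ (fun x => u * x) '' I, q * p = u) := by
  have key : ∀ p ∈ I, ∃ s ∈ I, s * p = u := by
    intro p hp
    set K : Set S := {y | ∃ s ∈ I, y = s * p} with hK
    have hKne : K.Nonempty := ⟨u * p, u, huI, rfl⟩
    have hKideal : ∀ s : S, ∀ x ∈ K, s * x ∈ K := by
      rintro s x ⟨t, ht, rfl⟩
      exact ⟨s * t, hideal s t ht, (mul_assoc s t p).symm⟩
    have hKsub : K ⊆ I := by
      rintro x ⟨t, ht, rfl⟩
      exact hideal t p hp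
    have := hmin K hKne hKideal hKsub
    have : u ∈ K := this ▸ huI
    obtain ⟨s, hs, hsu⟩ := this
    exact ⟨s, hs, hsu.symm⟩
  refine ⟨key, ?_⟩
  rintro p ⟨x, hx, rfl⟩
  obtain ⟨s, hs, hsp⟩ := key (u * x) (hideal u x hx)
  exact ⟨u * s, ⟨s, hs, rfl⟩, by rw [mul_assoc, hsp, hu]⟩
end
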